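/- Let Γ be a finite simplicial graph such that no induced subgraph of Γ is a square C₄ or a path with four vertices L₃. If Γ is connected, then Γ has a vertex v which is adjacent to every other vertex of Γ. -/

import Mathlib

/-!
Take a vertex `v` of maximum degree; it suffices that the closed neighbourhood of `v` is closed
under adjacency, since `Γ` is connected. If not, there are `v ∼ w ∼ u` with `u ≁ v`. Since `w` is
adjacent to `u` and `v` but has no more neighbours than `v`, some neighbour `x ≠ w` of `v` is not
adjacent to `w`. Then `v, w, u, x` span an induced `C₄` if `u ∼ x` and an induced `L₃`
(`x – v – w – u`) otherwise.
-/

/-- The cycle graph `C₄` on four vertices. -/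
def cycleFour : SimpleGraph (Fin 4) :=
  SimpleGraph.fromRel (fun a b => b = a + 1)

/-- The path graph `L₃` on four vertices (a path of length 3). -/
def pathFour : SimpleGraph (Fin 4) :=
  SimpleGraph.fromRel (fun a b => (b : ℕ) = (a : ℕ) + 1)

/-- `Δ` occurs as an induced subgraph of `Γ`. -/
def HasInducedCopy {V W : Type*} (Γ : SimpleGraph V) (Δ : SimpleGraph W) : Prop :=
  ∃ f : W ↪ V, ∀ a b : W, Γ.Adj (f a) (f b) ↔ Δ.Adj a b

namespace SimpleGraph

variable {V : Type*} {G : SimpleGraph V}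

theorem hasInducedCopy_cycleFour {a b c d : V}
    (hab : G.Adj a b) (hbc : G.Adj b c) (hcd : G.Adj c d) (hda : G.Adj d a)
    (hac : ¬ G.Adj a c) (hbd : ¬ G.Adj b d) (hac' : a ≠ c) (hbd' : b ≠ d) :
    HasInducedCopy G cycleFour := by
  refine ⟨⟨![a, b, c, d], fun i j h => ?_⟩, fun i j => ?_⟩
  · fin_cases i <;> fin_cases j <;>
      simp_all [hab.ne, hbc.ne, hcd.ne, hda.ne, hab.ne', hbc.ne', hcd.ne', hda.ne']
  · change G.Adj (![a, b, c, d] i) (![a, b, c, d] j) ↔ _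
    fin_cases i <;> fin_cases j <;>
      simp [cycleFour, hab, hbc, hcd, hda, hac, hbd, hab.symm, hbc.symm, hcd.symm, hda.symm,
        G.adj_comm c a, G.adj_comm d b]

theorem hasInducedCopy_pathFour {a b c d : V}
    (hab : G.Adj a b) (hbc : G.Adj b c) (hcd : G.Adj c d)
    (hac : ¬ G.Adj a c) (hbd : ¬ G.Adj b d) (had : ¬ G.Adj a d)
    (hac' : a ≠ c) (hbd' : b ≠ d) (had' : a ≠ d) :
    HasInducedCopy G pathFour := by
  refine ⟨⟨![a, b, c, d], fun i j h => ?_⟩, fun i j => ?_⟩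
  · fin_cases i <;> fin_cases j <;>
      simp_all [hab.ne, hbc.ne, hcd.ne, hab.ne', hbc.ne', hcd.ne']
  · change G.Adj (![a, b, c, d] i) (![a, b, c, d] j) ↔ _
    fin_cases i <;> fin_cases j <;>
      simp [pathFour, hab, hbc, hcd, hac, hbd, had, hab.symm, hbc.symm, hcd.symm,
        G.adj_comm c a, G.adj_comm d b, G.adj_comm d a]

theorem exists_adj_not_adj_of_degree_le [G.LocallyFinite] {u v w : V}
    (hdeg : G.degree w ≤ G.degree v) (hvw : G.Adj v w) (hwu : G.Adj w u)
    (hvu : ¬ G.Adj v u) (huv : u ≠ v) :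
    ∃ x, G.Adj v x ∧ ¬ G.Adj w x ∧ x ≠ w := by
  classical
  by_contra! h
  have hsub : insert u (insert v ((G.neighborFinset v).erase w)) ⊆ G.neighborFinset w := by
    intro x hx
    simp only [Finset.mem_insert, Finset.mem_erase, mem_neighborFinset] at hx ⊢
    rcases hx with rfl | rfl | ⟨hxw, hvx⟩
    · exact hwu
    · exact hvw.symm
    · by_contra hwx
      exact hxw (h x hvx hwx)
  have hu : u ∉ insert v ((G.neighborFinset v).erase w) := by
    simp [huv, hvu]
  have hv : v ∉ (G.neighborFinset v).erase w := by simp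
  have hw : w ∈ G.neighborFinset v := (mem_neighborFinset G v w).2 hvw
  have hcard := Finset.card_le_card hsub
  rw [Finset.card_insert_of_notMem hu, Finset.card_insert_of_notMem hv,
    Finset.card_erase_of_mem hw, card_neighborFinset_eq_degree,
    card_neighborFinset_eq_degree] at hcard
  have : 0 < G.degree v := G.degree_pos_iff_exists_adj v |>.2 ⟨w, hvw⟩
  omega

theorem adj_of_adj_of_forall_degree_le [G.LocallyFinite]
    (hC4 : ¬ HasInducedCopy G cycleFour) (hL3 : ¬ HasInducedCopy G pathFour)
    {u v w : V} (hmax : ∀ w, G.degree w ≤ G.degree v) (hvw : G.Adj v w) (hwu : G.Adj w u)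
    (huv : u ≠ v) : G.Adj v u := by
  by_contra hvu
  obtain ⟨x, hvx, hwx, hxw⟩ := exists_adj_not_adj_of_degree_le (hmax w) hvw hwu hvu huv
  have hxu : x ≠ u := by rintro rfl; exact hvu hvx
  by_cases hux : G.Adj u x
  · exact hC4 (hasInducedCopy_cycleFour hvw hwu hux hvx.symm hvu hwx huv.symm hxw.symm)
  · exact hL3 (hasInducedCopy_pathFour hvx.symm hvw hwu (fun h => hwx h.symm) hvu
      (fun h => hux h.symm) hxw huv.symm hxu)

theorem Walk.mem_of_forall_adj_mem {s : Set V} (hs : ∀ ⦃a b⦄, G.Adj a b → a ∈ s → b ∈ s)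
    {u v : V} (p : G.Walk u v) (hu : u ∈ s) : v ∈ s := by
  induction p with
  | nil => exact hu
  | cons h _ ih => exact ih (hs h hu)

theorem Connected.mem_of_forall_adj_mem (hG : G.Connected) {s : Set V}
    (hs : ∀ ⦃a b⦄, G.Adj a b → a ∈ s → b ∈ s) {u : V} (hu : u ∈ s) (v : V) : v ∈ s :=
  (hG u v).elim fun p => p.mem_of_forall_adj_mem hs hu

end SimpleGraph

open SimpleGraph in
theorem stmt_0 {V : Type*} [Fintype V] (Γ : SimpleGraph V)
    (hC4 : ¬ HasInducedCopy Γ cycleFour) (hL3 : ¬ HasInducedCopy Γ pathFour)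
    (hconn : Γ.Connected) :
    ∃ v : V, ∀ u : V, u ≠ v → Γ.Adj v u := by
  classical
  have := hconn.nonempty
  obtain ⟨v, -, hmax⟩ := Finset.exists_max_image Finset.univ (Γ.degree ·) Finset.univ_nonempty
  have hclosed : ∀ ⦃a b⦄, Γ.Adj a b → a ∈ {u | u = v ∨ Γ.Adj v u} →
      b ∈ {u | u = v ∨ Γ.Adj v u} := by
    rintro a b hab (rfl | hva)
    · exact Or.inr hab
    · exact or_iff_not_imp_left.2
        (adj_of_adj_of_forall_degree_le hC4 hL3 (fun w => hmax w (Finset.mem_univ w)) hva hab)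
  exact ⟨v, fun u hu => (hconn.mem_of_forall_adj_mem hclosed (Or.inl rfl) u).resolve_left hu⟩
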